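/- arXiv:1308.3099 — 5 statements merged into one kernel-verified Lean document; each statement's English description precedes it below -/
import Mathlib

section
/- Define by recursion on ordinals: ℷ₀ = ℵ₀; ℷ_{α+1} = min{ ℷ : 2^ℷ > 2^{ℷ_α} }; ℷ_α = Σ_{β<α} ℷ_β for limit α. Then the sequence (ℷ_α) is strictly increasing, and each ℷ_{α+1} is a regular cardinal. -/
/-!
Let `κ = ℷ_{α+1}` be the least cardinal with `2 ^ ℷ_α < 2 ^ κ`. Then `ℷ_α < κ` and `2 ^ θ ≤ 2 ^ ℷ_α`
for all `θ < κ`; together with `ℷ_β ≤ Σ_{γ<α} ℷ_γ` at limits this gives strict monotonicity.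
If `κ` were singular, writing it as a sum of `cf κ` smaller cardinals would give
`2 ^ κ ≤ (2 ^ ℷ_α) ^ cf κ = 2 ^ (ℷ_α * cf κ) ≤ 2 ^ ℷ_α`, since `ℷ_α * cf κ < κ`: a contradiction.
-/

open Cardinal

universe u

/-- The gimel sequence: `ℷ₀ = ℵ₀`, `ℷ_{α+1} = min {ℷ : 2^ℷ > 2^{ℷ_α}}`, and
`ℷ_α = Σ_{β<α} ℷ_β` for limit `α`. -/
noncomputable def gimel (α : Ordinal.{u}) : Cardinal.{u} :=
  Ordinal.limitRecOn α
    ℵ₀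
    (fun _ g => sInf {c : Cardinal.{u} | (2 : Cardinal.{u}) ^ g < 2 ^ c})
    (fun o _ IH => Cardinal.sum fun i : o.ToType =>
      IH (@Ordinal.typein o.ToType (· < ·) isWellOrder_lt i)
        (Ordinal.typein_lt_self i))

open Order

theorem strictMono_of_lt_succ_of_isSuccLimit {α β : Type*} [LinearOrder α] [WellFoundedLT α]
    [SuccOrder α] [Preorder β] {f : α → β} (hs : ∀ a, f a < f (succ a))
    (hl : ∀ {a b}, IsSuccLimit a → b < a → f b ≤ f a) : StrictMono f := by
  intro a b
  induction b using SuccOrder.limitRecOn with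
  | isMin b hb => exact fun hab => (hb.not_lt hab).elim
  | succ b hb IH =>
    intro hab
    obtain rfl | h := (lt_succ_iff_eq_or_lt_of_not_isMax hb).1 hab
    · exact hs a
    · exact (IH h).trans (hs b)
  | isSuccLimit b hb _ =>
    exact fun hab => (hs a).trans_le (hl hb (hb.succ_lt hab))

namespace Cardinal

theorem exists_le_sum_of_mk_eq_cof {κ : Cardinal.{u}} (hκ : ℵ₀ ≤ κ) :
    ∃ (ι : Type u) (f : ι → Cardinal.{u}), #ι = κ.ord.cof ∧ (∀ i, f i < κ) ∧ κ ≤ sum f := by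
  induction κ using Cardinal.inductionOn with | mk α
  obtain ⟨_, _, hα⟩ := exists_ord_eq_type_lt α
  have : NoMaxOrder α := by
    rw [← Ordinal.isSuccPrelimit_type_lt_iff, ← hα]
    exact (isSuccLimit_ord hκ).isSuccPrelimit
  obtain ⟨s, hs, hs'⟩ := exists_cof_eq α
  refine ⟨s, fun i => #(Set.Iio i.1), ?_, fun i => mk_Iio_lt i.1 hα, ?_⟩
  · rw [hs', hα, Ordinal.cof_type]
  · rw [← mk_univ, ← isCofinal_iff_iUnion_Iio_eq_univ.1 hs, Set.biUnion_eq_iUnion]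
    exact mk_iUnion_le_sum_mk

theorem two_power_le_power_cof {κ μ : Cardinal.{u}} (hκ : ℵ₀ ≤ κ)
    (h : ∀ θ < κ, (2 : Cardinal) ^ θ ≤ μ) : (2 : Cardinal) ^ κ ≤ μ ^ κ.ord.cof := by
  obtain ⟨ι, f, hι, hf, hsum⟩ := exists_le_sum_of_mk_eq_cof hκ
  calc (2 : Cardinal) ^ κ ≤ 2 ^ sum f := power_le_power_left two_ne_zero hsum
    _ = prod fun i => (2 : Cardinal) ^ f i := power_sum 2 f
    _ ≤ prod fun _ : ι => μ := prod_le_prod _ _ fun i => h _ (hf i)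
    _ = μ ^ κ.ord.cof := by rw [prod_const', hι]

theorem two_power_lt_two_power_sInf (μ : Cardinal.{u}) :
    (2 : Cardinal) ^ μ < 2 ^ sInf {c : Cardinal | (2 : Cardinal) ^ μ < 2 ^ c} :=
  csInf_mem (s := {c : Cardinal | (2 : Cardinal) ^ μ < 2 ^ c}) ⟨2 ^ μ, cantor _⟩

theorem two_power_le_of_lt_sInf {μ θ : Cardinal.{u}}
    (h : θ < sInf {c : Cardinal | (2 : Cardinal) ^ μ < 2 ^ c}) : (2 : Cardinal) ^ θ ≤ 2 ^ μ :=
  not_lt.1 fun hθ => h.not_ge (csInf_le' hθ)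

theorem lt_sInf_two_power_lt (μ : Cardinal.{u}) :
    μ < sInf {c : Cardinal | (2 : Cardinal) ^ μ < 2 ^ c} :=
  lt_of_not_ge fun h => (two_power_lt_two_power_sInf μ).not_ge (power_le_power_left two_ne_zero h)

theorem isRegular_sInf_two_power_lt {μ : Cardinal.{u}} (hμ : ℵ₀ ≤ μ) :
    IsRegular (sInf {c : Cardinal | (2 : Cardinal) ^ μ < 2 ^ c}) := by
  set κ := sInf {c : Cardinal | (2 : Cardinal) ^ μ < 2 ^ c}
  have hκ : ℵ₀ ≤ κ := hμ.trans (lt_sInf_two_power_lt μ).le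
  refine ⟨hκ, not_lt.1 fun hcof => (two_power_lt_two_power_sInf μ).not_ge ?_⟩
  calc (2 : Cardinal) ^ κ ≤ (2 ^ μ) ^ κ.ord.cof :=
        two_power_le_power_cof hκ fun θ => two_power_le_of_lt_sInf
    _ = 2 ^ (μ * κ.ord.cof) := power_mul.symm
    _ ≤ 2 ^ μ := two_power_le_of_lt_sInf (mul_lt_of_lt hκ (lt_sInf_two_power_lt μ) hcof)

end Cardinal

theorem gimel_zero : gimel (0 : Ordinal.{u}) = ℵ₀ :=
  Ordinal.limitRecOn_zero _ _ _

theorem gimel_add_one (α : Ordinal.{u}) :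
    gimel (α + 1) = sInf {c : Cardinal.{u} | (2 : Cardinal.{u}) ^ gimel α < 2 ^ c} :=
  Ordinal.limitRecOn_add_one _ _ _ _

theorem gimel_of_isSuccLimit {o : Ordinal.{u}} (ho : IsSuccLimit o) :
    gimel o = sum fun i : o.ToType => gimel (@Ordinal.typein o.ToType (· < ·) isWellOrder_lt i) :=
  Ordinal.limitRecOn_limit _ _ _ _ ho

theorem gimel_le_of_isSuccLimit {o β : Ordinal.{u}} (ho : IsSuccLimit o) (hβ : β < o) :
    gimel β ≤ gimel o := by
  rw [gimel_of_isSuccLimit ho]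
  convert le_sum _ (Ordinal.ToType.mk ⟨β, hβ⟩)
  exact congrArg (gimel ∘ Subtype.val) (Ordinal.ToType.mk.symm_apply_apply ⟨β, hβ⟩).symm

theorem gimel_strictMono : StrictMono gimel.{u} :=
  strictMono_of_lt_succ_of_isSuccLimit
    (fun α => (gimel_add_one α).symm ▸ lt_sInf_two_power_lt (gimel α)) gimel_le_of_isSuccLimit

theorem aleph0_le_gimel (α : Ordinal.{u}) : ℵ₀ ≤ gimel α :=
  gimel_zero.ge.trans (gimel_strictMono.monotone (zero_le : 0 ≤ α))

theorem stmt6 : StrictMono gimel ∧ ∀ α : Ordinal.{u}, (gimel (α + 1)).IsRegular := by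
  refine ⟨gimel_strictMono, fun α => ?_⟩
  rw [gimel_add_one]
  exact isRegular_sInf_two_power_lt (aleph0_le_gimel α)
end

section
/- For any infinite linear order J with a dense subset I, there exist linear orders I** and J** with I** a dense subset of J**, |J**| = |J|, |I**| = |I|, both dense without endpoints, and such that for every a < b in I**, the open interval (a,b) in J** has cardinality |J| and (a,b) ∩ I** has cardinality |I|. -/
open Cardinal

universe u

/-- `D` is a dense subset of the linear order `α`: between any two elements of `α`
there is an element of `D`. -/
def IsDenseSub {α : Type u} [LinearOrder α] (D : Set α) : Prop :=
  ∀ a b : α, a < b → ∃ d ∈ D, a ≤ d ∧ d ≤ b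

/-- `ded κ`: the supremum of the cardinalities of linear orders having a dense subset
of size at most `κ`. -/
noncomputable def ded (κ : Cardinal.{u}) : Cardinal.{u} :=
  sSup {c : Cardinal.{u} | ∃ (α : Type u) (_ : LinearOrder α) (D : Set α),
    IsDenseSub D ∧ #D ≤ κ ∧ c = #α}


set_option linter.unusedSectionVars false

namespace Stmt9Aux

variable {J : Type u} [LinearOrder J]

def pj (x : Lex (J × ℚ)) : J := (ofLex x).1
def pq (x : Lex (J × ℚ)) : ℚ := (ofLex x).2

theorem lex_lt_iff (x y : Lex (J × ℚ)) :
    x < y ↔ pj x < pj y ∨ (pj x = pj y ∧ pq x < pq y) :=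
  Prod.Lex.lt_iff

@[simp] theorem pj_toLex (j : J) (q : ℚ) : pj (toLex (j, q)) = j := rfl
@[simp] theorem pq_toLex (j : J) (q : ℚ) : pq (toLex (j, q)) = q := rfl

variable (I : Set J)

def Sp (x : Lex (J × ℚ)) : Prop :=
  pj x ∈ I ∨ (pq x = 0 ∧ (∃ i ∈ I, i < pj x) ∧ (∃ i ∈ I, pj x < i))

def Ok : List (Lex (J × ℚ)) → Prop
  | [] => False
  | [x] => Sp I x
  | x :: l => pj x ∈ I ∧ Ok l

def AllI (l : List (Lex (J × ℚ))) : Prop := ∀ x ∈ l, pj x ∈ I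

variable {I}

@[simp] theorem Ok_nil : Ok I [] ↔ False := Iff.rfl
@[simp] theorem Ok_single {x} : Ok I [x] ↔ Sp I x := Iff.rfl
@[simp] theorem Ok_cons2 {x y l} : Ok I (x :: y :: l) ↔ pj x ∈ I ∧ Ok I (y :: l) := Iff.rfl

theorem Ok_cons {x : Lex (J × ℚ)} {l} (hl : l ≠ []) :
    Ok I (x :: l) ↔ pj x ∈ I ∧ Ok I l := by
  cases l with
  | nil => exact absurd rfl hl
  | cons y t => exact Ok_cons2

theorem Ok.ne_nil {l} (h : Ok I l) : l ≠ [] := by rintro rfl; exact h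

theorem Sp_of_mem {x : Lex (J × ℚ)} (hx : pj x ∈ I) : Sp I x := Or.inl hx

theorem Ok.head_sp {x : Lex (J × ℚ)} {l} (h : Ok I (x :: l)) : Sp I x := by
  cases l with
  | nil => exact h
  | cons y t => exact Or.inl h.1

theorem Ok_of_allI : ∀ {l}, l ≠ [] → AllI I l → Ok I l := by
  intro l
  induction l with
  | nil => intro h; exact absurd rfl h
  | cons x t ih =>
    intro _ hall
    cases t with
    | nil => exact Sp_of_mem (hall x (List.mem_singleton_self x))
    | cons y s =>
      exact ⟨hall x (List.mem_cons_self), ih (List.cons_ne_nil y s)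
        (fun z hz => hall z (List.mem_cons_of_mem x hz))⟩

theorem allI_of_prefix : ∀ {f t}, Ok I (f ++ t) → t ≠ [] → AllI I f := by
  intro f
  induction f with
  | nil => intro t _ _ z hz; exact absurd hz List.not_mem_nil
  | cons x f ih =>
    intro t h ht z hz
    have hft : f ++ t ≠ [] := fun h0 => ht (List.append_eq_nil_iff.mp h0).2
    rw [List.cons_append, Ok_cons hft] at h
    rcases List.mem_cons.mp hz with rfl | hz'
    · exact h.1
    · exact ih h.2 ht z hz'

theorem Ok_suffix : ∀ {f t}, Ok I (f ++ t) → t ≠ [] → Ok I t := by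
  intro f
  induction f with
  | nil => intro t h _; exact h
  | cons x f ih =>
    intro t h ht
    have hft : f ++ t ≠ [] := fun h0 => ht (List.append_eq_nil_iff.mp h0).2
    rw [List.cons_append, Ok_cons hft] at h
    exact ih h.2 ht

theorem Ok_append : ∀ {f g}, AllI I f → Ok I g → Ok I (f ++ g) := by
  intro f
  induction f with
  | nil => intro g _ hg; exact hg
  | cons x f ih =>
    intro g hall hg
    have h2 : Ok I (f ++ g) := ih (fun z hz => hall z (List.mem_cons_of_mem x hz)) hg
    rw [List.cons_append, Ok_cons h2.ne_nil]
    exact ⟨hall x (List.mem_cons_self), h2⟩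

theorem allI_append {f g} (hf : AllI I f) (hg : AllI I g) : AllI I (f ++ g) := by
  intro z hz
  rcases List.mem_append.mp hz with h | h
  · exact hf z h
  · exact hg z h


section LexList
variable {α : Type*} [LinearOrder α]

theorem list_lt_iff_lex {l l' : List α} : l < l' ↔ List.Lex (· < ·) l l' := Iff.rfl

theorem lex_append_self : ∀ (l : List α) {t}, t ≠ [] → List.Lex (· < ·) l (l ++ t)
  | [], t, ht => by
    cases t with
    | nil => exact absurd rfl ht
    | cons a s => exact List.Lex.nil
  | a :: l, t, ht => List.Lex.cons (lex_append_self l ht)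

theorem lex_append_not_prefix {f g : List α} (h : List.Lex (· < ·) f g) :
    ¬ f <+: g → ∀ (w : List α), List.Lex (· < ·) (f ++ w) g := by
  induction h with
  | nil => intro hp; exact absurd (List.nil_prefix) hp
  | @rel a l1 b l2 hab => intro _ w; exact List.Lex.rel hab
  | @cons a l1 l2 h ih =>
    intro hp w
    exact List.Lex.cons (ih (fun hq => hp (List.cons_prefix_cons.mpr ⟨rfl, hq⟩)) w)

end LexList

section Mid
variable (hI : IsDenseSub I)
include hI

theorem exists_mid {x y : Lex (J × ℚ)} (hx : Sp I x) (hy : Sp I y)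
    (hxy : x < y) : ∃ m, pj m ∈ I ∧ x < m ∧ m < y := by
  rcases (lex_lt_iff x y).1 hxy with h | ⟨h1, h2⟩
  · obtain ⟨i, hiI, hxi, hiy⟩ := hI _ _ h
    rcases lt_or_eq_of_le hxi with hxi' | hxi'
    · rcases lt_or_eq_of_le hiy with hiy' | hiy'
      · exact ⟨toLex (i, 0), hiI, (lex_lt_iff _ _).2 (Or.inl hxi'),
          (lex_lt_iff _ _).2 (Or.inl hiy')⟩
      · exact ⟨toLex (pj y, pq y - 1), hiy' ▸ hiI, (lex_lt_iff _ _).2 (Or.inl h),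
          (lex_lt_iff _ _).2 (Or.inr ⟨rfl, by simp⟩)⟩
    · exact ⟨toLex (pj x, pq x + 1), hxi' ▸ hiI, (lex_lt_iff _ _).2 (Or.inr ⟨rfl, by simp⟩),
        (lex_lt_iff _ _).2 (Or.inl h)⟩
  · have hxI : pj x ∈ I := by
      rcases hx with h | ⟨h0, _⟩
      · exact h
      · rcases hy with h' | ⟨h0', _⟩
        · rw [h1]; exact h'
        · rw [h0] at h2; rw [h0'] at h2; exact absurd h2 (lt_irrefl 0)
    obtain ⟨r, hr1, hr2⟩ := exists_between h2
    exact ⟨toLex (pj x, r), hxI, (lex_lt_iff _ _).2 (Or.inr ⟨rfl, hr1⟩),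
      (lex_lt_iff _ _).2 (Or.inr ⟨by simpa using h1, hr2⟩)⟩

theorem exists_lt_sp {y : Lex (J × ℚ)} (hy : Sp I y) : ∃ m, pj m ∈ I ∧ m < y := by
  rcases hy with h | ⟨_, ⟨i, hiI, hi⟩, _⟩
  · exact ⟨toLex (pj y, pq y - 1), h, (lex_lt_iff _ _).2 (Or.inr ⟨rfl, by simp⟩)⟩
  · exact ⟨toLex (i, 0), hiI, (lex_lt_iff _ _).2 (Or.inl hi)⟩

theorem exists_sp_lt {y : Lex (J × ℚ)} (hy : Sp I y) : ∃ m, pj m ∈ I ∧ y < m := by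
  rcases hy with h | ⟨_, _, ⟨i, hiI, hi⟩⟩
  · exact ⟨toLex (pj y, pq y + 1), h, (lex_lt_iff _ _).2 (Or.inr ⟨rfl, by simp⟩)⟩
  · exact ⟨toLex (i, 0), hiI, (lex_lt_iff _ _).2 (Or.inl hi)⟩

theorem mid_notpre : ∀ {f g}, List.Lex (· < ·) f g → Ok I f → Ok I g → ¬ f <+: g →
    ∃ h, h ≠ [] ∧ AllI I h ∧ List.Lex (· < ·) f h ∧ List.Lex (· < ·) h g := by
  intro f g hlex
  induction hlex with
  | nil => intro hf _ _; exact hf.elim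
  | @rel a l1 b l2 hab =>
    intro hf hg _
    obtain ⟨m, hm, h1, h2⟩ := exists_mid hI hf.head_sp hg.head_sp hab
    refine ⟨[m], List.cons_ne_nil _ _, ?_, .rel h1, .rel h2⟩
    intro z hz; rw [List.mem_singleton] at hz; subst hz; exact hm
  | @cons a l1 l2 h ih =>
    intro hf hg hp
    have hl1 : l1 ≠ [] := by
      rintro rfl
      exact hp (List.cons_prefix_cons.mpr ⟨rfl, List.nil_prefix⟩)
    have hl2 : l2 ≠ [] := by
      rintro rfl
      cases h
    obtain ⟨h', hne, hAll, hx, hy⟩ := ih ((Ok_cons hl1).1 hf).2 ((Ok_cons hl2).1 hg).2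
      (fun hq => hp (List.cons_prefix_cons.mpr ⟨rfl, hq⟩))
    refine ⟨a :: h', List.cons_ne_nil _ _, ?_, .cons hx, .cons hy⟩
    intro z hz
    rcases List.mem_cons.mp hz with rfl | hz'
    · exact ((Ok_cons hl1).1 hf).1
    · exact hAll z hz'

end Mid

variable (I) in
abbrev KT := {l : List (Lex (J × ℚ)) // Ok I l}

variable (I) in
def DS : Set (KT I) := {l | AllI I l.1}

theorem KT_lt {a b : KT I} : a < b ↔ List.Lex (· < ·) a.1 b.1 := by
  rw [← Subtype.coe_lt_coe]; exact Iff.rfl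

section Struct
variable (hI : IsDenseSub I)
include hI

theorem dense_mid {a b : KT I} (hab : a < b) : ∃ c : KT I, a < c ∧ c < b := by
  obtain ⟨f, hf⟩ := a
  obtain ⟨g, hg⟩ := b
  have hlex : List.Lex (· < ·) f g := KT_lt.1 hab
  by_cases hp : f <+: g
  · obtain ⟨t, rfl⟩ := hp
    have ht : t ≠ [] := by
      rintro rfl
      rw [List.append_nil] at hlex
      exact lt_irrefl f (list_lt_iff_lex.2 hlex)
    have hAf : AllI I f := allI_of_prefix hg ht
    have hOt : Ok I t := Ok_suffix hg ht
    cases t with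
    | nil => exact absurd rfl ht
    | cons y t' =>
      cases t' with
      | nil =>
        obtain ⟨m, hm, hmy⟩ := exists_lt_sp hI (Ok_single.1 hOt)
        refine ⟨⟨f ++ [m], Ok_append hAf (Ok_single.2 (Sp_of_mem hm))⟩, ?_, ?_⟩
        · exact KT_lt.2 (lex_append_self f (List.cons_ne_nil _ _))
        · exact KT_lt.2 (List.Lex.append_left _ (List.Lex.rel hmy) f)
      | cons z t'' =>
        have hy : pj y ∈ I := ((Ok_cons (List.cons_ne_nil _ _)).1 hOt).1
        refine ⟨⟨f ++ [y], Ok_append hAf (Ok_single.2 (Sp_of_mem hy))⟩, ?_, ?_⟩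
        · exact KT_lt.2 (lex_append_self f (List.cons_ne_nil _ _))
        · exact KT_lt.2 (List.Lex.append_left _ (List.Lex.cons List.Lex.nil) f)
  · obtain ⟨h, hne, hAll, h1, h2⟩ := mid_notpre hI hlex hf hg hp
    exact ⟨⟨h, Ok_of_allI hne hAll⟩, KT_lt.2 h1, KT_lt.2 h2⟩

theorem dense_mid_D {a b : KT I} (ha : a ∈ DS I) (hb : b ∈ DS I) (hab : a < b) :
    ∃ c : KT I, c ∈ DS I ∧ a < c ∧ c < b := by
  obtain ⟨f, hf⟩ := a
  obtain ⟨g, hg⟩ := b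
  have hlex : List.Lex (· < ·) f g := KT_lt.1 hab
  by_cases hp : f <+: g
  · obtain ⟨t, rfl⟩ := hp
    have ht : t ≠ [] := by
      rintro rfl
      rw [List.append_nil] at hlex
      exact lt_irrefl f (list_lt_iff_lex.2 hlex)
    have hAf : AllI I f := allI_of_prefix hg ht
    cases t with
    | nil => exact absurd rfl ht
    | cons y t' =>
      have hy : pj y ∈ I := hb y (List.mem_append_right f (List.mem_cons_self))
      cases t' with
      | nil =>
        set m : Lex (J × ℚ) := toLex (pj y, pq y - 1) with hmdef
        have hm : pj m ∈ I := hy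
        have hmy : m < y := (lex_lt_iff _ _).2 (Or.inr ⟨rfl, by simp [hmdef]⟩)
        refine ⟨⟨f ++ [m], Ok_append hAf (Ok_single.2 (Sp_of_mem hm))⟩, ?_, ?_, ?_⟩
        · intro z hz
          rcases List.mem_append.mp hz with h | h
          · exact hAf z h
          · rw [List.mem_singleton] at h; subst h; exact hm
        · exact KT_lt.2 (lex_append_self f (List.cons_ne_nil _ _))
        · exact KT_lt.2 (List.Lex.append_left _ (List.Lex.rel hmy) f)
      | cons z t'' =>
        refine ⟨⟨f ++ [y], Ok_append hAf (Ok_single.2 (Sp_of_mem hy))⟩, ?_, ?_, ?_⟩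
        · intro w hw
          rcases List.mem_append.mp hw with h | h
          · exact hAf w h
          · rw [List.mem_singleton] at h; subst h; exact hy
        · exact KT_lt.2 (lex_append_self f (List.cons_ne_nil _ _))
        · exact KT_lt.2 (List.Lex.append_left _ (List.Lex.cons List.Lex.nil) f)
  · obtain ⟨h, hne, hAll, h1, h2⟩ := mid_notpre hI hlex hf hg hp
    exact ⟨⟨h, Ok_of_allI hne hAll⟩, hAll, KT_lt.2 h1, KT_lt.2 h2⟩

theorem denseSub_D {a b : KT I} (hab : a < b) : ∃ d ∈ DS I, a ≤ d ∧ d ≤ b := by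
  by_cases ha : a ∈ DS I
  · exact ⟨a, ha, le_refl a, le_of_lt hab⟩
  · obtain ⟨f, hf⟩ := a
    obtain ⟨g, hg⟩ := b
    have hlex : List.Lex (· < ·) f g := KT_lt.1 hab
    have hp : ¬ f <+: g := by
      rintro ⟨t, rfl⟩
      have ht : t ≠ [] := by
        rintro rfl
        rw [List.append_nil] at hlex
        exact lt_irrefl f (list_lt_iff_lex.2 hlex)
      exact ha (allI_of_prefix hg ht)
    obtain ⟨h, hne, hAll, h1, h2⟩ := mid_notpre hI hlex hf hg hp
    exact ⟨⟨h, Ok_of_allI hne hAll⟩, hAll, le_of_lt (KT_lt.2 h1), le_of_lt (KT_lt.2 h2)⟩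

theorem exists_below (a : KT I) : ∃ b : KT I, b ∈ DS I ∧ b < a := by
  obtain ⟨f, hf⟩ := a
  cases f with
  | nil => exact hf.elim
  | cons x l =>
    obtain ⟨m, hm, hmx⟩ := exists_lt_sp hI hf.head_sp
    refine ⟨⟨[m], Ok_single.2 (Sp_of_mem hm)⟩, ?_, KT_lt.2 (List.Lex.rel hmx)⟩
    intro z hz; rw [List.mem_singleton] at hz; subst hz; exact hm

theorem exists_above (a : KT I) : ∃ b : KT I, b ∈ DS I ∧ a < b := by
  obtain ⟨f, hf⟩ := a
  cases f with
  | nil => exact hf.elim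
  | cons x l =>
    obtain ⟨m, hm, hxm⟩ := exists_sp_lt hI hf.head_sp
    refine ⟨⟨[m], Ok_single.2 (Sp_of_mem hm)⟩, ?_, KT_lt.2 (List.Lex.rel hxm)⟩
    intro z hz; rw [List.mem_singleton] at hz; subst hz; exact hm

theorem int_key {a b : KT I} (ha : a ∈ DS I) (hb : b ∈ DS I) (hab : a < b) :
    ∃ m, pj m ∈ I ∧ ∀ w : List (Lex (J × ℚ)),
      List.Lex (· < ·) ((a.1 ++ [m]) ++ w) b.1 := by
  have hlex : List.Lex (· < ·) a.1 b.1 := KT_lt.1 hab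
  by_cases hp : a.1 <+: b.1
  · obtain ⟨t, ht⟩ := hp
    have htne : t ≠ [] := by
      rintro rfl
      rw [List.append_nil] at ht
      rw [ht] at hlex
      exact lt_irrefl _ (list_lt_iff_lex.2 hlex)
    cases t with
    | nil => exact absurd rfl htne
    | cons y t' =>
      have hy : pj y ∈ I := hb y (by rw [← ht]; exact List.mem_append_right _ (List.mem_cons_self))
      refine ⟨toLex (pj y, pq y - 1), hy, fun w => ?_⟩
      rw [← ht, List.append_assoc]
      have hmy : (toLex (pj y, pq y - 1) : Lex (J × ℚ)) < y :=
        (lex_lt_iff _ _).2 (Or.inr ⟨rfl, by simp⟩)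
      exact List.Lex.append_left _ (List.Lex.rel hmy) a.1
  · obtain ⟨x, l, ha'⟩ := List.exists_cons_of_ne_nil a.2.ne_nil
    have hx : pj x ∈ I := ha x (by rw [ha']; exact List.mem_cons_self)
    refine ⟨x, hx, fun w => ?_⟩
    rw [List.append_assoc]
    exact lex_append_not_prefix hlex hp ([x] ++ w)

end Struct

theorem I_inf [Infinite J] (hI : IsDenseSub I) : Infinite ↥I := by
  by_contra hfin
  rw [not_infinite_iff_finite] at hfin
  have hinj : Function.Injective (fun j : J =>
      (({i : ↥I | (i : J) < j}, {i : ↥I | (i : J) ≤ j}) : Set ↥I × Set ↥I)) := by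
    have key : ∀ a b : J, a < b →
        (({i : ↥I | (i : J) < a}, {i : ↥I | (i : J) ≤ a}) : Set ↥I × Set ↥I)
          ≠ ({i : ↥I | (i : J) < b}, {i : ↥I | (i : J) ≤ b}) := by
      intro a b hab heq
      obtain ⟨i, hiI, h1, h2⟩ := hI a b hab
      have e1 : {i : ↥I | (i : J) < a} = {i : ↥I | (i : J) < b} := congrArg Prod.fst heq
      have e2 : {i : ↥I | (i : J) ≤ a} = {i : ↥I | (i : J) ≤ b} := congrArg Prod.snd heq
      have hia : (⟨i, hiI⟩ : ↥I) ∈ {i : ↥I | (i : J) ≤ a} := by rw [e2]; exact h2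
      have hEq : i = a := le_antisymm hia h1
      have haI : a ∈ I := hEq ▸ hiI
      have hmem : (⟨a, haI⟩ : ↥I) ∈ {i : ↥I | (i : J) < a} := by rw [e1]; exact hab
      exact lt_irrefl a hmem
    intro x y hxy
    rcases lt_trichotomy x y with h | h | h
    · exact absurd hxy (key x y h)
    · exact h
    · exact absurd hxy.symm (key y x h)
  haveI := hfin
  haveI : Finite (Set ↥I × Set ↥I) := inferInstance
  haveI : Finite J := Finite.of_injective _ hinj
  exact not_finite J

theorem mk_lexJQ [Infinite J] : #(Lex (J × ℚ)) = #J := by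
  have h1 : #(Lex (J × ℚ)) = #(J × ℚ) := (Cardinal.mk_congr (toLex : J × ℚ ≃ _)).symm
  rw [h1, Cardinal.mk_prod, Cardinal.mk_eq_aleph0 ℚ, Cardinal.lift_aleph0, Cardinal.lift_uzero]
  exact Cardinal.mul_eq_left (Cardinal.aleph0_le_mk J) (Cardinal.aleph0_le_mk J)
    Cardinal.aleph0_ne_zero

instance [Nonempty J] : Infinite (Lex (J × ℚ)) :=
  Infinite.of_injective (toLex : J × ℚ → Lex (J × ℚ)) toLex.injective

end Stmt9Aux

open Stmt9Aux

theorem stmt9 (J : Type u) [LinearOrder J] [Infinite J] (I : Set J) (hI : IsDenseSub I) :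
    ∃ (K : Type u) (_ : LinearOrder K) (D : Set K),
      IsDenseSub D ∧ #K = #J ∧ #D = #I ∧
      DenselyOrdered K ∧ NoMinOrder K ∧ NoMaxOrder K ∧
      DenselyOrdered D ∧ NoMinOrder D ∧ NoMaxOrder D ∧
      ∀ a ∈ D, ∀ b ∈ D, a < b →
        #(Set.Ioo a b) = #J ∧ #↥(Set.Ioo a b ∩ D) = #I := by
  classical
  haveI hIinf : Infinite ↥I := I_inf hI
  -- basic injections
  let e0 : ↥I → ↥(DS I) := fun i =>
    ⟨⟨[toLex ((i : J), (0:ℚ))], Ok_single.2 (Sp_of_mem i.2)⟩, by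
      intro z hz; rw [List.mem_singleton] at hz; subst hz; exact i.2⟩
  have he0 : Function.Injective e0 := by
    intro x y h
    have h1 := Subtype.ext_iff.mp (Subtype.ext_iff.mp h)
    simp only [e0, List.cons.injEq, and_true] at h1
    have h2 : ((x : J), (0:ℚ)) = ((y : J), (0:ℚ)) := toLex.injective h1
    exact Subtype.ext (congrArg Prod.fst h2)
  haveI hKinf : Infinite (KT I) :=
    Infinite.of_injective (fun i : ↥I => (e0 i).1)
      (fun x y h => he0 (Subtype.ext h))
  -- cardinality of K
  have hKle : #(KT I) ≤ #J := by
    calc #(KT I) ≤ #(List (Lex (J × ℚ))) := Cardinal.mk_subtype_le _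
    _ = #(Lex (J × ℚ)) := Cardinal.mk_list_eq_mk _
    _ = #J := mk_lexJQ
  have hJle : #J ≤ #(KT I) := by
    set T : Set J := {j | (∃ i ∈ I, i < j) ∧ (∃ i ∈ I, j < i)} with hT
    set B1 : Set J := {j | j ∉ I ∧ ¬ ∃ i ∈ I, i < j} with hB1
    set B2 : Set J := {j | j ∉ I ∧ ¬ ∃ i ∈ I, j < i} with hB2
    have hcover : (Set.univ : Set J) ⊆ (I ∪ T) ∪ (B1 ∪ B2) := by
      intro j _
      by_cases hj : j ∈ I
      · exact Or.inl (Or.inl hj)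
      by_cases h1 : ∃ i ∈ I, i < j
      · by_cases h2 : ∃ i ∈ I, j < i
        · exact Or.inl (Or.inr ⟨h1, h2⟩)
        · exact Or.inr (Or.inr ⟨hj, h2⟩)
      · exact Or.inr (Or.inl ⟨hj, h1⟩)
    have hB1s : B1.Subsingleton := by
      intro a ha b hb
      by_contra hne
      rcases lt_or_gt_of_ne hne with h | h
      · obtain ⟨i, hiI, _, h2⟩ := hI a b h
        exact hb.2 ⟨i, hiI, lt_of_le_of_ne h2 (fun he => hb.1 (he ▸ hiI))⟩
      · obtain ⟨i, hiI, _, h2⟩ := hI b a h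
        exact ha.2 ⟨i, hiI, lt_of_le_of_ne h2 (fun he => ha.1 (he ▸ hiI))⟩
    have hB2s : B2.Subsingleton := by
      intro a ha b hb
      by_contra hne
      rcases lt_or_gt_of_ne hne with h | h
      · obtain ⟨i, hiI, h1, _⟩ := hI a b h
        exact ha.2 ⟨i, hiI, lt_of_le_of_ne' h1 (fun he => ha.1 (he ▸ hiI))⟩
      · obtain ⟨i, hiI, h1, _⟩ := hI b a h
        exact hb.2 ⟨i, hiI, lt_of_le_of_ne' h1 (fun he => hb.1 (he ▸ hiI))⟩
    have hsp : ∀ j : ↥(I ∪ T), Ok I [toLex ((j : J), (0:ℚ))] := by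
      intro j
      rcases j.2 with hj | hj
      · exact Ok_single.2 (Or.inl hj)
      · exact Ok_single.2 (Or.inr ⟨rfl, hj.1, hj.2⟩)
    have hITle : #↥(I ∪ T) ≤ #(KT I) := by
      refine Cardinal.mk_le_of_injective
        (f := fun j : ↥(I ∪ T) => (⟨[toLex ((j : J), (0:ℚ))], hsp j⟩ : KT I)) ?_
      intro x y h
      have h1 := Subtype.ext_iff.mp h
      simp only [List.cons.injEq, and_true] at h1
      have h2 : ((x : J), (0:ℚ)) = ((y : J), (0:ℚ)) := toLex.injective h1
      exact Subtype.ext (congrArg Prod.fst h2)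
    have h2le : (1 + 1 : Cardinal) ≤ #(KT I) := by
      refine le_trans ?_ (Cardinal.infinite_iff.mp hKinf)
      rw [one_add_one_eq_two]
      exact_mod_cast (Cardinal.nat_lt_aleph0 2).le
    calc #J = #(Set.univ : Set J) := Cardinal.mk_univ.symm
    _ ≤ #↥((I ∪ T) ∪ (B1 ∪ B2)) := Cardinal.mk_le_mk_of_subset hcover
    _ ≤ #↥(I ∪ T) + #↥(B1 ∪ B2) := Cardinal.mk_union_le _ _
    _ ≤ #(KT I) + (#↥B1 + #↥B2) := add_le_add hITle (Cardinal.mk_union_le _ _)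
    _ ≤ #(KT I) + (1 + 1) :=
      add_le_add_right (add_le_add
        (Cardinal.mk_le_one_iff_set_subsingleton.mpr hB1s)
        (Cardinal.mk_le_one_iff_set_subsingleton.mpr hB2s)) _
    _ = #(KT I) := Cardinal.add_eq_left (Cardinal.infinite_iff.mp hKinf) h2le
  have hKcard : #(KT I) = #J := le_antisymm hKle hJle
  -- cardinality of D
  have hDle : #↥(DS I) ≤ #↥I := by
    have hmap : ∀ (l : List (Lex (J × ℚ))) (H : ∀ x ∈ l, pj x ∈ I),
        (l.pmap (fun x hx => ((⟨pj x, hx⟩ : ↥I), pq x)) H).map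
          (fun y : ↥I × ℚ => toLex ((y.1 : J), y.2)) = l := by
      intro l
      induction l with
      | nil => intro H; rfl
      | cons x t ih =>
        intro H
        simp only [List.pmap, List.map_cons]
        exact congrArg₂ List.cons rfl (ih _)
    have hinj : Function.Injective (fun d : ↥(DS I) =>
        d.1.1.pmap (fun x hx => ((⟨pj x, hx⟩ : ↥I), pq x)) d.2) := by
      intro d1 d2 h
      have h2 := congrArg (List.map (fun y : ↥I × ℚ => toLex ((y.1 : J), y.2))) h
      rw [hmap _ d1.2, hmap _ d2.2] at h2
      exact Subtype.ext (Subtype.ext h2)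
    calc #↥(DS I) ≤ #(List (↥I × ℚ)) := Cardinal.mk_le_of_injective hinj
    _ = #(↥I × ℚ) := Cardinal.mk_list_eq_mk _
    _ = #↥I := by
      rw [Cardinal.mk_prod, Cardinal.mk_eq_aleph0 ℚ, Cardinal.lift_aleph0,
        Cardinal.lift_uzero]
      exact Cardinal.mul_eq_left (Cardinal.aleph0_le_mk ↥I) (Cardinal.aleph0_le_mk ↥I)
        Cardinal.aleph0_ne_zero
  have hDcard : #↥(DS I) = #↥I := le_antisymm hDle (Cardinal.mk_le_of_injective he0)
  refine ⟨KT I, inferInstance, DS I, fun a b hab => denseSub_D hI hab, hKcard, hDcard,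
    ⟨fun a b hab => dense_mid hI hab⟩,
    ⟨fun a => (exists_below hI a).elim (fun b hb => ⟨b, hb.2⟩)⟩,
    ⟨fun a => (exists_above hI a).elim (fun b hb => ⟨b, hb.2⟩)⟩,
    ⟨?_⟩, ⟨?_⟩, ⟨?_⟩, ?_⟩
  · intro x y hxy
    obtain ⟨c, hcD, h1, h2⟩ := dense_mid_D hI x.2 y.2 (Subtype.coe_lt_coe.mpr hxy)
    exact ⟨⟨c, hcD⟩, Subtype.coe_lt_coe.mp h1, Subtype.coe_lt_coe.mp h2⟩
  · intro x
    obtain ⟨b, hbD, hb⟩ := exists_below hI x.1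
    exact ⟨⟨b, hbD⟩, Subtype.coe_lt_coe.mp hb⟩
  · intro x
    obtain ⟨b, hbD, hb⟩ := exists_above hI x.1
    exact ⟨⟨b, hbD⟩, Subtype.coe_lt_coe.mp hb⟩
  · intro a ha b hb hab
    obtain ⟨m, hm, hwall⟩ := int_key hI ha hb hab
    have hAllam : AllI I (a.1 ++ [m]) := by
      intro z hz
      rcases List.mem_append.mp hz with h | h
      · exact ha z h
      · rw [List.mem_singleton] at h; subst h; exact hm
    have hlow : ∀ (w : List (Lex (J × ℚ))), List.Lex (· < ·) a.1 ((a.1 ++ [m]) ++ w) := by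
      intro w
      rw [List.append_assoc]
      exact lex_append_self a.1 (by simp)
    constructor
    · refine le_antisymm ((Cardinal.mk_subtype_le _).trans hKle) ?_
      rw [← hKcard]
      refine Cardinal.mk_le_of_injective (f := fun c : KT I =>
        (⟨⟨(a.1 ++ [m]) ++ c.1, Ok_append hAllam c.2⟩,
          KT_lt.2 (hlow c.1), KT_lt.2 (hwall c.1)⟩ : ↥(Set.Ioo a b))) ?_
      intro c1 c2 h
      have h1 := Subtype.ext_iff.mp (Subtype.ext_iff.mp h)
      exact Subtype.ext (List.append_cancel_left h1)
    · refine le_antisymm ((Cardinal.mk_le_mk_of_subset Set.inter_subset_right).trans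
        hDcard.le) ?_
      rw [← hDcard]
      refine Cardinal.mk_le_of_injective (f := fun d : ↥(DS I) =>
        (⟨⟨(a.1 ++ [m]) ++ d.1.1, Ok_append hAllam d.1.2⟩,
          ⟨KT_lt.2 (hlow d.1.1), KT_lt.2 (hwall d.1.1)⟩,
          allI_append hAllam d.2⟩ : ↥(Set.Ioo a b ∩ DS I))) ?_
      intro d1 d2 h
      have h1 := Subtype.ext_iff.mp (Subtype.ext_iff.mp h)
      exact Subtype.ext (Subtype.ext (List.append_cancel_left h1))
end

section
/- Let M be a model of the theory T_n (as in Definition of the dense-levels theory) in which |P₀^M| = λ. Then |Q_m^M| ≤ ded(|P_m^M|) ≤ ℶ_{m+1}(λ) and |P_{m+1}^M| = |Q_m^M \ P_m^M|; consequently |M| ≤ ℶ_n(λ). In particular T_n has no model M with |P₀^M| = ℵ₀ and |M| ≥ ℶ_ω. -/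
open Cardinal

universe u

/-- A model of the theory `T_n`: linearly ordered levels `Q_m` (here the types `A m`),
each a dense linear order without endpoints, with a dense-codense subset `P m`,
bijections `e m` from `P (m+1)` onto `Q m \ P m`, satisfying the mixing density axiom. -/
structure TnModel (n : ℕ) where
  A : ℕ → Type u
  [ord : ∀ m, LinearOrder (A m)]
  P : ∀ m, Set (A m)
  dlo : ∀ m, m < n → DenselyOrdered (A m)
  nomin : ∀ m, m < n → NoMinOrder (A m)
  nomax : ∀ m, m < n → NoMaxOrder (A m)
  dense : ∀ m, m < n → ∀ a b : A m, a < b → ∃ d ∈ P m, a < d ∧ d < b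
  codense : ∀ m, m < n → ∀ a b : A m, a < b → ∃ d ∈ (P m)ᶜ, a < d ∧ d < b
  e : ∀ m, m + 1 < n → (↥(P (m + 1)) ≃ ↥((P m)ᶜ))
  mixing : ∀ m, ∀ h : m + 1 < n,
    ∀ a₂ c₂ : ↥(P (m + 1)), a₂ < c₂ →
      ∀ a₁ c₁ : ↥((P m)ᶜ), a₁ < c₁ →
        ∃ b₂ : ↥(P (m + 1)), a₂ < b₂ ∧ b₂ < c₂ ∧ a₁ < e m h b₂ ∧ e m h b₂ < c₁

attribute [instance] TnModel.ord

/-- Iterated beth: `ℶ₀(κ) = κ`, `ℶ_{k+1}(κ) = 2^{ℶ_k(κ)}`. -/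
def bethN : ℕ → Cardinal.{u} → Cardinal.{u}
  | 0, κ => κ
  | k + 1, κ => 2 ^ bethN k κ

/-!
An element of a linear order is determined by its strict and non-strict cuts in a dense subset,
so `|Q_m| ≤ 2^(|P_m| + |P_m|)`, which is `2^|P_m|` because `P_m` is empty or infinite. The
bijection `P_{m+1} ≃ Q_m \ P_m` pushes `|P_m| ≤ ℶ_m(λ)` up through the levels. If `P_0` is
finite the model is empty (a nonempty level has an infinite `P_m`, and an empty one leaves
`P_{m+1}` empty); otherwise the bounds are infinite and absorb the finite sum over the levels.
-/

section DenseSubset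

variable {α : Type u} [LinearOrder α] {D : Set α}

theorem IsDenseSub.le_of_forall_mem {a b : α} (hD : IsDenseSub D)
    (hlt : ∀ d ∈ D, d < a → d < b) (hle : ∀ d ∈ D, d ≤ a → d ≤ b) : a ≤ b := by
  by_contra! hba
  obtain ⟨d, hd, hbd, hda⟩ := hD b a hba
  rcases hbd.eq_or_lt with rfl | hbd
  · exact lt_irrefl _ (hlt _ hd hba)
  · exact (hle d hd hda).not_gt hbd

theorem IsDenseSub.mk_le_two_power (hD : IsDenseSub D) {κ : Cardinal.{u}} (hDκ : #D ≤ κ) :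
    #α ≤ 2 ^ (κ + κ) := by
  let cuts : α → Set D × Set D := fun a => ({d | (d : α) < a}, {d | (d : α) ≤ a})
  have hcuts : Function.Injective cuts := by
    intro a b hab
    have hlt (d : D) : (d : α) < a ↔ d < b := Set.ext_iff.mp (congrArg Prod.fst hab) d
    have hle (d : D) : (d : α) ≤ a ↔ d ≤ b := Set.ext_iff.mp (congrArg Prod.snd hab) d
    exact le_antisymm
      (hD.le_of_forall_mem (fun d hd => (hlt ⟨d, hd⟩).mp) fun d hd => (hle ⟨d, hd⟩).mp)
      (hD.le_of_forall_mem (fun d hd => (hlt ⟨d, hd⟩).mpr) fun d hd => (hle ⟨d, hd⟩).mpr)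
  calc #α ≤ 2 ^ (#D + #D) := by simpa [power_add] using mk_le_of_injective hcuts
    _ ≤ 2 ^ (κ + κ) := power_le_power_left two_ne_zero (add_le_add hDκ hDκ)

theorem ded_le_two_power (κ : Cardinal.{u}) : ded κ ≤ 2 ^ (κ + κ) :=
  csSup_le' fun _ ⟨_, _, _, hD, hDκ, hc⟩ => hc ▸ hD.mk_le_two_power hDκ

theorem IsDenseSub.mk_le_ded (hD : IsDenseSub D) {κ : Cardinal.{u}} (hDκ : #D ≤ κ) : #α ≤ ded κ :=
  le_csSup ⟨_, fun _ ⟨_, _, _, hD, hDκ, hc⟩ => hc ▸ hD.mk_le_two_power hDκ⟩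
    ⟨α, ‹_›, D, hD, hDκ, rfl⟩

end DenseSubset

theorem bethN_monotone (κ : Cardinal.{u}) : Monotone (bethN · κ) :=
  monotone_nat_of_le_succ fun k => (cantor (bethN k κ)).le

theorem bethN_aleph0 (k : ℕ) : bethN.{u} k ℵ₀ = ℶ_ k := by
  induction k with
  | zero => simp [bethN]
  | succ k ih => rw [Nat.cast_add_one, beth_add_one, ← ih]; rfl

namespace TnModel

variable {n : ℕ} (M : TnModel.{u} n) {m : ℕ}

theorem isDenseSub_P (hm : m < n) : IsDenseSub (M.P m) := fun a b hab =>
  let ⟨d, hd, had, hdb⟩ := M.dense m hm a b hab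
  ⟨d, hd, had.le, hdb.le⟩

theorem mk_P_succ (hm : m + 1 < n) : #(M.P (m + 1)) = #↥((M.P m)ᶜ) :=
  mk_congr (M.e m hm)

theorem isEmpty_or_aleph0_le_mk_P (hm : m < n) : IsEmpty (M.A m) ∨ ℵ₀ ≤ #(M.P m) := by
  rcases isEmpty_or_nonempty (M.A m) with hA | hA
  · exact .inl hA
  have := M.nomax m hm
  have hunbounded (a : M.A m) : ∃ d ∈ M.P m, a < d := by
    obtain ⟨b, hab⟩ := exists_gt a
    obtain ⟨d, hd, had, -⟩ := M.dense m hm a b hab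
    exact ⟨d, hd, had⟩
  exact .inr <| infinite_iff.mp <| Set.infinite_coe_iff.mpr <|
    Set.infinite_of_forall_exists_gt hunbounded

theorem mk_P_add_self (hm : m < n) : #(M.P m) + #(M.P m) = #(M.P m) := by
  rcases M.isEmpty_or_aleph0_le_mk_P hm with hA | hP
  · simp
  · exact add_eq_self hP

theorem mk_A_le_ded (hm : m < n) : #(M.A m) ≤ ded #(M.P m) :=
  (M.isDenseSub_P hm).mk_le_ded le_rfl

theorem ded_mk_P_le_two_power (hm : m < n) : ded #(M.P m) ≤ 2 ^ #(M.P m) :=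
  (ded_le_two_power _).trans_eq (by rw [M.mk_P_add_self hm])

theorem mk_P_le_bethN {lam : Cardinal.{u}} (hP0 : #(M.P 0) ≤ lam) :
    ∀ m < n, #(M.P m) ≤ bethN m lam
  | 0, _ => hP0
  | k + 1, hk =>
    calc #(M.P (k + 1)) = #↥((M.P k)ᶜ) := M.mk_P_succ hk
      _ ≤ #(M.A k) := mk_set_le _
      _ ≤ ded #(M.P k) := M.mk_A_le_ded (by omega)
      _ ≤ 2 ^ #(M.P k) := M.ded_mk_P_le_two_power (by omega)
      _ ≤ 2 ^ bethN k lam := power_le_power_left two_ne_zero (mk_P_le_bethN hP0 k (by omega))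

theorem ded_mk_P_le_bethN {lam : Cardinal.{u}} (hP0 : #(M.P 0) ≤ lam) (hm : m < n) :
    ded #(M.P m) ≤ bethN (m + 1) lam :=
  (M.ded_mk_P_le_two_power hm).trans
    (power_le_power_left two_ne_zero (M.mk_P_le_bethN hP0 m hm))

theorem isEmpty_A_of_mk_P_zero_lt_aleph0 (hP0 : #(M.P 0) < ℵ₀) : ∀ m < n, IsEmpty (M.A m)
  | 0, h0 => (M.isEmpty_or_aleph0_le_mk_P h0).resolve_right hP0.not_ge
  | k + 1, hk => by
    have := isEmpty_A_of_mk_P_zero_lt_aleph0 hP0 k (by omega)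
    refine (M.isEmpty_or_aleph0_le_mk_P hk).resolve_right fun h => ?_
    simp [M.mk_P_succ hk, aleph0_ne_zero] at h

theorem sum_mk_A_le_bethN {lam : Cardinal.{u}} (hP0 : #(M.P 0) ≤ lam) :
    sum (fun m : Fin n => #(M.A m)) ≤ bethN n lam := by
  rcases lt_or_ge #(M.P 0) ℵ₀ with hfin | hinf
  · have := M.isEmpty_A_of_mk_P_zero_lt_aleph0 hfin
    simp [mk_eq_zero_iff.mpr (this _ (Fin.is_lt _))]
  · have hbig : ℵ₀ ≤ bethN n lam := hinf.trans (hP0.trans (bethN_monotone lam n.zero_le))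
    calc sum (fun m : Fin n => #(M.A m)) ≤ sum (fun _ : Fin n => bethN n lam) :=
          sum_le_sum _ _ fun m => (M.mk_A_le_ded m.2).trans <|
            (M.ded_mk_P_le_bethN hP0 m.2).trans (bethN_monotone lam m.2)
      _ = n * bethN n lam := by simp
      _ ≤ bethN n lam := (mul_le_max_of_aleph0_le_right hbig).trans
          (max_le ((natCast_lt_aleph0 (n := n)).le.trans hbig) le_rfl)

end TnModel

theorem stmt13_general (n : ℕ) (M : TnModel.{u} n) (lam : Cardinal.{u})
    (hP0 : #(M.P 0) = lam) :
    (∀ m < n, #(M.A m) ≤ ded #(M.P m) ∧ ded #(M.P m) ≤ bethN (m + 1) lam) ∧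
    (∀ m, m + 1 < n → #(M.P (m + 1)) = #↥((M.P m)ᶜ)) ∧
    Cardinal.sum (fun m : Fin n => #(M.A m)) ≤ bethN n lam ∧
    (lam = ℵ₀ → Cardinal.sum (fun m : Fin n => #(M.A m)) < Cardinal.beth Ordinal.omega0) := by
  refine ⟨fun m hm => ⟨M.mk_A_le_ded hm, M.ded_mk_P_le_bethN hP0.le hm⟩,
    fun m hm => M.mk_P_succ hm, M.sum_mk_A_le_bethN hP0.le, ?_⟩
  rintro rfl
  calc sum (fun m : Fin n => #(M.A m)) ≤ bethN n ℵ₀ := M.sum_mk_A_le_bethN hP0.le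
    _ = ℶ_ n := bethN_aleph0 n
    _ < ℶ_ Ordinal.omega0 := beth_strictMono (Ordinal.natCast_lt_omega0 n)

theorem stmt13 (n : ℕ) (hn : 0 < n) (M : TnModel.{u} n) (lam : Cardinal.{u})
    (hP0 : #(M.P 0) = lam) :
    (∀ m < n, #(M.A m) ≤ ded #(M.P m) ∧ ded #(M.P m) ≤ bethN (m + 1) lam) ∧
    (∀ m, m + 1 < n → #(M.P (m + 1)) = #↥((M.P m)ᶜ)) ∧
    Cardinal.sum (fun m : Fin n => #(M.A m)) ≤ bethN n lam ∧
    (lam = ℵ₀ → Cardinal.sum (fun m : Fin n => #(M.A m)) < Cardinal.beth Ordinal.omega0) :=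
  stmt13_general n M lam hP0
end

section
/- Assume there is no tree of cardinality λ (λ regular uncountable) with at least χ branches of length λ for some regular χ ≤ 2^λ, and that 2^κ < 2^λ for all κ < λ. Then 2^{<λ} < 2^λ. -/
open Cardinal

universe u

/-- A tree: a partial order in which the set of predecessors of any element is
well-ordered. -/
def IsTree (α : Type u) [PartialOrder α] : Prop :=
  ∀ t : α, IsWellOrder {s : α // s < t} (· < ·)

/-- A branch of length `μ`: a maximal chain whose order type is the ordinal `μ.ord`. -/
def IsBranchOfLength {α : Type u} [PartialOrder α] (B : Set α) (μ : Cardinal.{u}) : Prop :=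
  IsMaxChain (· ≤ ·) B ∧ ∃ h : IsWellOrder B (· < ·), @Ordinal.type B (· < ·) h = μ.ord

theorem stmt15 (lam : Cardinal.{u}) (h1 : lam.IsRegular) (h2 : ℵ₀ < lam)
    (h3 : ∃ χ : Cardinal.{u}, χ.IsRegular ∧ χ ≤ 2 ^ lam ∧
      ∀ (α : Type u) (_ : PartialOrder α), IsTree α → #α = lam →
        #{B : Set α // IsBranchOfLength B lam} < χ)
    (h4 : ∀ κ < lam, (2 : Cardinal.{u}) ^ κ < 2 ^ lam) :
    sSup {c : Cardinal.{u} | ∃ κ < lam, c = 2 ^ κ} < 2 ^ lam := by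
  haveI i : IsWellOrder lam.ord.ToType (· < ·) := isWellOrder_lt
  set f : lam.ord.ToType → Cardinal.{u} :=
    fun o => 2 ^ (Ordinal.typein (α := lam.ord.ToType) (· < ·) o).card with hf
  have hsup : iSup f < 2 ^ lam := by
    apply Ordinal.iSup_lt
    · rw [Cardinal.mk_toType, Cardinal.card_ord]
      exact Cardinal.lt_cof_power h2.le one_lt_two
    · intro o
      apply h4
      have := Ordinal.typein_lt_type (α := lam.ord.ToType) (· < ·) o
      rw [Ordinal.type_toType] at this
      have h := Ordinal.card_le_card this.le
      rw [Cardinal.card_ord] at h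
      rcases h.lt_or_eq with h | h
      · exact h
      · exfalso
        have hle : lam.ord ≤ Ordinal.typein (α := lam.ord.ToType) (· < ·) o := by
          conv_lhs => rw [← h]
          exact Cardinal.ord_card_le _
        exact absurd (hle.trans_lt this) (lt_irrefl _)
  refine lt_of_le_of_lt ?_ hsup
  apply csSup_le
  · exact ⟨1, 0, by simpa using (aleph0_pos.trans h2), by simp⟩
  · rintro c ⟨κ, hκ, rfl⟩
    have hlt : κ.ord < Ordinal.type (α := lam.ord.ToType) (· < ·) := by
      rw [Ordinal.type_toType]
      exact (Cardinal.ord_lt_ord).2 hκ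
    have : f (Ordinal.enum (α := lam.ord.ToType) (· < ·) ⟨κ.ord, hlt⟩) = 2 ^ κ := by
      rw [hf]
      simp [Ordinal.typein_enum, Cardinal.card_ord]
    rw [← this]
    exact le_ciSup (Cardinal.bddAbove_range f) _
end

section
/- Given two dense linear orders without endpoints A and B, each of cardinality λ, such that every open interval of A and of B has cardinality λ, there exists a bijection f : A → B such that for all a₁ < c₁ in A and b₁ < d₁ in B there is a ∈ A with a₁ < a < c₁ and b₁ < f(a) < d₁. -/
open Cardinal

universe u

namespace Stmt18Aux

open Set
open scoped Classical

variable {A B : Type u} [LinearOrder A] [LinearOrder B]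

/-- `s` is the graph of a partial injection. -/
def IsPI (s : Set (A × B)) : Prop :=
  (∀ p ∈ s, ∀ q ∈ s, p.1 = q.1 → p.2 = q.2) ∧ (∀ p ∈ s, ∀ q ∈ s, p.2 = q.2 → p.1 = q.1)

theorem IsPI.insert {s : Set (A × B)} (hs : IsPI s) {a : A} {b : B}
    (ha : a ∉ Prod.fst '' s) (hb : b ∉ Prod.snd '' s) : IsPI (insert (a, b) s) := by
  constructor
  · rintro p (rfl | hp) q (rfl | hq) h
    · rfl
    · exact absurd ⟨q, hq, h.symm⟩ ha
    · exact absurd ⟨p, hp, h⟩ ha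
    · exact hs.1 p hp q hq h
  · rintro p (rfl | hp) q (rfl | hq) h
    · rfl
    · exact absurd ⟨q, hq, h.symm⟩ hb
    · exact absurd ⟨p, hp, h⟩ hb
    · exact hs.2 p hp q hq h

theorem exists_not_mem_of_mk_lt {α : Type u} {u : Set α} (h : #u < #α) : ∃ x, x ∉ u := by
  by_contra hc
  push_neg at hc
  rw [Set.eq_univ_of_forall hc, Cardinal.mk_univ] at h
  exact lt_irrefl _ h

theorem exists_mem_not_mem_of_mk_lt {α : Type u} {t u : Set α} (h : #u < #t) :
    ∃ x ∈ t, x ∉ u := by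
  by_contra hc
  push_neg at hc
  exact absurd (Cardinal.mk_le_mk_of_subset hc) (not_le.mpr h)

theorem diff_insert_subsingleton (p : A × B) (s : Set (A × B)) :
    (insert p s \ s).Subsingleton :=
  Set.subsingleton_singleton.anti (by
    rintro x ⟨hx, hxs⟩
    rcases hx with rfl | h
    · exact Set.mem_singleton _
    · exact absurd h hxs)

/-- Step 1: put `a` into the domain if it isn't there, pairing it with a fresh point. -/
noncomputable def ext1 (a : A) (s : Set (A × B)) : Set (A × B) :=
  if h : a ∉ Prod.fst '' s ∧ ∃ b : B, b ∉ Prod.snd '' s then insert (a, h.2.choose) s else s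

/-- Step 2: put `b` into the range if it isn't there. -/
noncomputable def ext2 (b : B) (s : Set (A × B)) : Set (A × B) :=
  if h : b ∉ Prod.snd '' s ∧ ∃ a : A, a ∉ Prod.fst '' s then insert (h.2.choose, b) s else s

/-- Step 3: add a fresh pair inside the prescribed pair of intervals, if possible. -/
noncomputable def ext3 (P : A × A × B × B) (s : Set (A × B)) : Set (A × B) :=
  if h : (∃ a ∈ Set.Ioo P.1 P.2.1, a ∉ Prod.fst '' s) ∧
      (∃ b ∈ Set.Ioo P.2.2.1 P.2.2.2, b ∉ Prod.snd '' s) then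
    insert (h.1.choose, h.2.choose) s else s

theorem subset_ext1 (a : A) (s : Set (A × B)) : s ⊆ ext1 a s := by
  unfold ext1; split_ifs
  · exact Set.subset_insert _ _
  · exact Set.Subset.rfl

theorem subset_ext2 (b : B) (s : Set (A × B)) : s ⊆ ext2 b s := by
  unfold ext2; split_ifs
  · exact Set.subset_insert _ _
  · exact Set.Subset.rfl

theorem subset_ext3 (P : A × A × B × B) (s : Set (A × B)) : s ⊆ ext3 P s := by
  unfold ext3; split_ifs
  · exact Set.subset_insert _ _
  · exact Set.Subset.rfl

theorem isPI_ext1 {s : Set (A × B)} (hs : IsPI s) (a : A) : IsPI (ext1 a s) := by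
  unfold ext1; split_ifs with h
  · exact hs.insert h.1 h.2.choose_spec
  · exact hs

theorem isPI_ext2 {s : Set (A × B)} (hs : IsPI s) (b : B) : IsPI (ext2 b s) := by
  unfold ext2; split_ifs with h
  · exact hs.insert h.2.choose_spec h.1
  · exact hs

theorem isPI_ext3 {s : Set (A × B)} (hs : IsPI s) (P : A × A × B × B) : IsPI (ext3 P s) := by
  unfold ext3; split_ifs with h
  · exact hs.insert h.1.choose_spec.2 h.2.choose_spec.2
  · exact hs

theorem mk_ext1_diff (a : A) (s : Set (A × B)) : #(ext1 a s \ s : Set (A × B)) ≤ 1 := by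
  unfold ext1; split_ifs
  · exact (diff_insert_subsingleton _ _).cardinalMk_le_one
  · simp

theorem mk_ext2_diff (b : B) (s : Set (A × B)) : #(ext2 b s \ s : Set (A × B)) ≤ 1 := by
  unfold ext2; split_ifs
  · exact (diff_insert_subsingleton _ _).cardinalMk_le_one
  · simp

theorem mk_ext3_diff (P : A × A × B × B) (s : Set (A × B)) :
    #(ext3 P s \ s : Set (A × B)) ≤ 1 := by
  unfold ext3; split_ifs
  · exact (diff_insert_subsingleton _ _).cardinalMk_le_one
  · simp

theorem ext1_mem (a : A) {s : Set (A × B)} (h : #s < #B) : a ∈ Prod.fst '' ext1 a s := by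
  by_cases ha : a ∈ Prod.fst '' s
  · exact Set.image_mono (subset_ext1 a s) ha
  · have hb : ∃ b : B, b ∉ Prod.snd '' s :=
      exists_not_mem_of_mk_lt (Cardinal.mk_image_le.trans_lt h)
    unfold ext1
    rw [dif_pos ⟨ha, hb⟩]
    exact ⟨(a, _), Set.mem_insert _ _, rfl⟩

theorem ext2_mem (b : B) {s : Set (A × B)} (h : #s < #A) : b ∈ Prod.snd '' ext2 b s := by
  by_cases hb : b ∈ Prod.snd '' s
  · exact Set.image_mono (subset_ext2 b s) hb
  · have ha : ∃ a : A, a ∉ Prod.fst '' s :=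
      exists_not_mem_of_mk_lt (Cardinal.mk_image_le.trans_lt h)
    unfold ext2
    rw [dif_pos ⟨hb, ha⟩]
    exact ⟨(_, b), Set.mem_insert _ _, rfl⟩

theorem ext3_spec (P : A × A × B × B) {s : Set (A × B)}
    (h1 : #s < #(Set.Ioo P.1 P.2.1)) (h2 : #s < #(Set.Ioo P.2.2.1 P.2.2.2)) :
    ∃ p ∈ ext3 P s, p.1 ∈ Set.Ioo P.1 P.2.1 ∧ p.2 ∈ Set.Ioo P.2.2.1 P.2.2.2 := by
  have hc1 : ∃ a ∈ Set.Ioo P.1 P.2.1, a ∉ Prod.fst '' s :=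
    exists_mem_not_mem_of_mk_lt (Cardinal.mk_image_le.trans_lt h1)
  have hc2 : ∃ b ∈ Set.Ioo P.2.2.1 P.2.2.2, b ∉ Prod.snd '' s :=
    exists_mem_not_mem_of_mk_lt (Cardinal.mk_image_le.trans_lt h2)
  unfold ext3
  rw [dif_pos ⟨hc1, hc2⟩]
  exact ⟨(hc1.choose, hc2.choose), Set.mem_insert _ _, hc1.choose_spec.1, hc2.choose_spec.1⟩

/-- One full step of the construction. -/
noncomputable def extStep (a : A) (b : B) (P : A × A × B × B) (s : Set (A × B)) :
    Set (A × B) :=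
  ext3 P (ext2 b (ext1 a s))

theorem subset_extStep (a : A) (b : B) (P : A × A × B × B) (s : Set (A × B)) :
    s ⊆ extStep a b P s :=
  (subset_ext1 a s).trans ((subset_ext2 b _).trans (subset_ext3 P _))

theorem isPI_extStep {s : Set (A × B)} (hs : IsPI s) (a : A) (b : B) (P : A × A × B × B) :
    IsPI (extStep a b P s) :=
  isPI_ext3 (isPI_ext2 (isPI_ext1 hs a) b) P

theorem mk_extStep_diff (a : A) (b : B) (P : A × A × B × B) (s : Set (A × B)) :
    #(extStep a b P s \ s : Set (A × B)) ≤ 3 := by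
  have hsub : extStep a b P s \ s ⊆
      (ext3 P (ext2 b (ext1 a s)) \ ext2 b (ext1 a s)) ∪
        ((ext2 b (ext1 a s) \ ext1 a s) ∪ (ext1 a s \ s)) := by
    rintro x ⟨hx, hxs⟩
    by_cases h1 : x ∈ ext2 b (ext1 a s)
    · by_cases h2 : x ∈ ext1 a s
      · exact Or.inr (Or.inr ⟨h2, hxs⟩)
      · exact Or.inr (Or.inl ⟨h1, h2⟩)
    · exact Or.inl ⟨hx, h1⟩
  calc #(extStep a b P s \ s : Set (A × B)) ≤ _ := Cardinal.mk_le_mk_of_subset hsub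
    _ ≤ #(ext3 P (ext2 b (ext1 a s)) \ ext2 b (ext1 a s) : Set (A × B)) +
        #((ext2 b (ext1 a s) \ ext1 a s) ∪ (ext1 a s \ s) : Set (A × B)) :=
      Cardinal.mk_union_le _ _
    _ ≤ 1 + (1 + 1) := by
      refine add_le_add (mk_ext3_diff _ _) ((Cardinal.mk_union_le _ _).trans ?_)
      exact add_le_add (mk_ext2_diff _ _) (mk_ext1_diff _ _)
    _ = 3 := by norm_num

end Stmt18Aux

open Stmt18Aux in
theorem stmt18 (lam : Cardinal.{u}) (A B : Type u) [LinearOrder A] [LinearOrder B]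
    [DenselyOrdered A] [NoMinOrder A] [NoMaxOrder A]
    [DenselyOrdered B] [NoMinOrder B] [NoMaxOrder B]
    (hA : #A = lam) (hB : #B = lam)
    (hIA : ∀ a c : A, a < c → #(Set.Ioo a c) = lam)
    (hIB : ∀ b d : B, b < d → #(Set.Ioo b d) = lam) :
    ∃ f : A → B, Function.Bijective f ∧
      ∀ a₁ c₁ : A, a₁ < c₁ → ∀ b₁ d₁ : B, b₁ < d₁ →
        ∃ a : A, a₁ < a ∧ a < c₁ ∧ b₁ < f a ∧ f a < d₁ := by
  classical
  rcases isEmpty_or_nonempty A with hAe | hAne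
  · -- degenerate case: `A` is empty, hence `lam = 0` and `B` is empty
    have hl0 : lam = 0 := by rw [← hA, Cardinal.mk_eq_zero_iff]; exact hAe
    haveI : IsEmpty B := Cardinal.mk_eq_zero_iff.mp (hB.trans hl0)
    refine ⟨fun a => isEmptyElim a, ⟨fun a => isEmptyElim a, fun b => isEmptyElim b⟩,
      fun a₁ => isEmptyElim a₁⟩
  -- main case
  obtain ⟨a0⟩ := hAne
  obtain ⟨c0, hc0⟩ := exists_gt a0
  haveI : Infinite (Set.Ioo a0 c0) := Set.Ioo.infinite hc0
  have hlam : ℵ₀ ≤ lam := (hIA a0 c0 hc0) ▸ Cardinal.aleph0_le_mk (Set.Ioo a0 c0)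
  have h3lam : (3 : Cardinal) < lam := (Cardinal.nat_lt_aleph0 3).trans_le hlam
  set ι := lam.ord.ToType with hιdef
  have hι : #ι = lam := Cardinal.mk_ord_toType lam
  have hsmall : ∀ i : ι, #(Set.Iio i) < lam := fun i => Cardinal.mk_Iio_ord_toType i
  obtain ⟨eA⟩ : Nonempty (ι ≃ A) := Cardinal.eq.mp (hι.trans hA.symm)
  obtain ⟨eB⟩ : Nonempty (ι ≃ B) := Cardinal.eq.mp (hι.trans hB.symm)
  have h4 : #(A × A × B × B) = lam := by
    have hm := Cardinal.mul_eq_self hlam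
    simp [Cardinal.mk_prod, Cardinal.lift_id, hA, hB, hm]
  obtain ⟨eP⟩ : Nonempty (ι ≃ A × A × B × B) := Cardinal.eq.mp (hι.trans h4.symm)
  have wf : WellFounded ((· < ·) : ι → ι → Prop) := IsWellFounded.wf
  -- the transfinite recursion
  obtain ⟨stage, hstage⟩ : ∃ st : ι → Set (A × B),
      ∀ i, st i = extStep (eA i) (eB i) (eP i) (⋃ j, ⋃ _ : j < i, st j) :=
    ⟨wf.fix fun i IH => extStep (eA i) (eB i) (eP i) (⋃ j, ⋃ h : j < i, IH j h),
      fun i => wf.fix_eq _ i⟩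
  set prev : ι → Set (A × B) := fun i => ⋃ j, ⋃ _ : j < i, stage j with hprevdef
  have hprev_mem : ∀ (i : ι) (p : A × B), p ∈ prev i ↔ ∃ j, j < i ∧ p ∈ stage j := by
    intro i p
    simp [hprevdef, Set.mem_iUnion]
  have hst : ∀ i, stage i = extStep (eA i) (eB i) (eP i) (prev i) := hstage
  have hps : ∀ i, prev i ⊆ stage i := by
    intro i
    rw [hst i]; exact subset_extStep _ _ _ _
  have hsp : ∀ i j : ι, j < i → stage j ⊆ prev i := by
    intro i j hj p hp
    exact (hprev_mem i p).mpr ⟨j, hj, hp⟩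
  have hmono : ∀ i j : ι, j ≤ i → stage j ⊆ stage i := by
    intro i j hj
    rcases eq_or_lt_of_le hj with rfl | hj
    · exact Set.Subset.rfl
    · exact (hsp i j hj).trans (hps i)
  -- cardinality bounds
  have hNw : ∀ i, #(stage i \ prev i : Set (A × B)) ≤ 3 := by
    intro i
    rw [hst i]
    exact mk_extStep_diff _ _ _ _
  have hcover : ∀ i : ι, stage i ⊆ ⋃ j ∈ Set.Iic i, (stage j \ prev j) := by
    intro i
    refine wf.induction (C := fun i => stage i ⊆ ⋃ j ∈ Set.Iic i, (stage j \ prev j)) i ?_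
    intro i IH p hp
    by_cases hp' : p ∈ prev i
    · obtain ⟨j, hj, hpj⟩ := (hprev_mem i p).mp hp'
      obtain ⟨k, hk, hpk⟩ := Set.mem_iUnion₂.mp (IH j hj hpj)
      exact Set.mem_iUnion₂.mpr ⟨k, hk.trans hj.le, hpk⟩
    · exact Set.mem_iUnion₂.mpr ⟨i, le_refl i, hp, hp'⟩
  have hprev_cover : ∀ i : ι, prev i ⊆ ⋃ j ∈ Set.Iio i, (stage j \ prev j) := by
    intro i p hp
    obtain ⟨j, hj, hpj⟩ := (hprev_mem i p).mp hp
    obtain ⟨k, hk, hpk⟩ := Set.mem_iUnion₂.mp (hcover j hpj)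
    exact Set.mem_iUnion₂.mpr ⟨k, lt_of_le_of_lt hk hj, hpk⟩
  have hprev_card : ∀ i : ι, #(prev i) < lam := by
    intro i
    have h1 : #(prev i) ≤ #(⋃ j ∈ Set.Iio i, (stage j \ prev j)) :=
      Cardinal.mk_le_mk_of_subset (hprev_cover i)
    have h2 : #(⋃ j ∈ Set.Iio i, (stage j \ prev j)) ≤ #(Set.Iio i) * 3 := by
      rw [Set.biUnion_eq_iUnion]
      refine Cardinal.mk_iUnion_le_sum_mk.trans ?_
      calc (Cardinal.sum fun j : Set.Iio i => #(stage j.1 \ prev j.1 : Set (A × B)))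
          ≤ Cardinal.sum fun _ : Set.Iio i => (3 : Cardinal) :=
            Cardinal.sum_le_sum _ _ fun j => hNw j.1
        _ = #(Set.Iio i) * 3 := Cardinal.sum_const' _ _
    exact lt_of_le_of_lt (h1.trans h2) (Cardinal.mul_lt_of_lt hlam (hsmall i) h3lam)
  have hstage_card : ∀ i : ι, #(stage i) < lam := by
    intro i
    have h1 : stage i ⊆ prev i ∪ (stage i \ prev i) := by
      intro p hp
      by_cases h : p ∈ prev i
      · exact Or.inl h
      · exact Or.inr ⟨hp, h⟩
    refine lt_of_le_of_lt ((Cardinal.mk_le_mk_of_subset h1).trans (Cardinal.mk_union_le _ _)) ?_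
    exact Cardinal.add_lt_of_lt hlam (hprev_card i) (lt_of_le_of_lt (hNw i) h3lam)
  -- the stages are partial injections
  have hPI : ∀ i, IsPI (stage i) := by
    intro i
    refine wf.induction (C := fun i => IsPI (stage i)) i ?_
    intro i IH
    have hprevPI : IsPI (prev i) := by
      constructor
      · intro p hp q hq h
        obtain ⟨j₁, hj₁, hp₁⟩ := (hprev_mem i p).mp hp
        obtain ⟨j₂, hj₂, hq₂⟩ := (hprev_mem i q).mp hq
        exact (IH (max j₁ j₂) (max_lt hj₁ hj₂)).1 p
          (hmono _ _ (le_max_left _ _) hp₁) q (hmono _ _ (le_max_right _ _) hq₂) h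
      · intro p hp q hq h
        obtain ⟨j₁, hj₁, hp₁⟩ := (hprev_mem i p).mp hp
        obtain ⟨j₂, hj₂, hq₂⟩ := (hprev_mem i q).mp hq
        exact (IH (max j₁ j₂) (max_lt hj₁ hj₂)).2 p
          (hmono _ _ (le_max_left _ _) hp₁) q (hmono _ _ (le_max_right _ _) hq₂) h
    rw [hst i]
    exact isPI_extStep hprevPI _ _ _
  -- domain and range coverage
  have hsub1 : ∀ i, ext1 (eA i) (prev i) ⊆ stage i := by
    intro i
    rw [hst i]
    exact (subset_ext2 _ _).trans (subset_ext3 _ _)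
  have hsub2 : ∀ i, ext2 (eB i) (ext1 (eA i) (prev i)) ⊆ stage i := by
    intro i
    rw [hst i]
    exact subset_ext3 _ _
  have hdom : ∀ i, eA i ∈ Prod.fst '' stage i := by
    intro i
    have h1 : #(prev i) < #B := by rw [hB]; exact hprev_card i
    exact Set.image_mono (hsub1 i) (ext1_mem (eA i) h1)
  have hran : ∀ i, eB i ∈ Prod.snd '' stage i := by
    intro i
    have h1 : #(ext1 (eA i) (prev i)) < #A := by
      rw [hA]
      exact lt_of_le_of_lt (Cardinal.mk_le_mk_of_subset (hsub1 i)) (hstage_card i)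
    exact Set.image_mono (hsub2 i) (ext2_mem (eB i) h1)
  have hdens : ∀ i : ι, (eP i).1 < (eP i).2.1 → (eP i).2.2.1 < (eP i).2.2.2 →
      ∃ p ∈ stage i, p.1 ∈ Set.Ioo (eP i).1 (eP i).2.1 ∧
        p.2 ∈ Set.Ioo (eP i).2.2.1 (eP i).2.2.2 := by
    intro i h₁ h₂
    have hc : #(ext2 (eB i) (ext1 (eA i) (prev i))) < lam :=
      lt_of_le_of_lt (Cardinal.mk_le_mk_of_subset (hsub2 i)) (hstage_card i)
    have hcard1 : #(ext2 (eB i) (ext1 (eA i) (prev i))) <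
        #(Set.Ioo (eP i).1 (eP i).2.1) := by
      rw [hIA _ _ h₁]; exact hc
    have hcard2 : #(ext2 (eB i) (ext1 (eA i) (prev i))) <
        #(Set.Ioo (eP i).2.2.1 (eP i).2.2.2) := by
      rw [hIB _ _ h₂]; exact hc
    obtain ⟨p, hp, hp1, hp2⟩ := ext3_spec (eP i) hcard1 hcard2
    refine ⟨p, ?_, hp1, hp2⟩
    rw [hst i]
    exact hp
  -- the total graph
  set Γ : Set (A × B) := ⋃ i, stage i with hΓdef
  have hΓ_mem : ∀ p : A × B, p ∈ Γ ↔ ∃ i, p ∈ stage i := by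
    intro p; simp [hΓdef, Set.mem_iUnion]
  have hΓPI : IsPI Γ := by
    constructor
    · intro p hp q hq h
      obtain ⟨i, hi⟩ := (hΓ_mem p).mp hp
      obtain ⟨j, hj⟩ := (hΓ_mem q).mp hq
      exact (hPI (max i j)).1 p (hmono _ _ (le_max_left _ _) hi) q
        (hmono _ _ (le_max_right _ _) hj) h
    · intro p hp q hq h
      obtain ⟨i, hi⟩ := (hΓ_mem p).mp hp
      obtain ⟨j, hj⟩ := (hΓ_mem q).mp hq
      exact (hPI (max i j)).2 p (hmono _ _ (le_max_left _ _) hi) q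
        (hmono _ _ (le_max_right _ _) hj) h
  have hdomΓ : ∀ a : A, ∃ b : B, (a, b) ∈ Γ := by
    intro a
    obtain ⟨p, hp, hp1⟩ := hdom (eA.symm a)
    have hp1' : p.1 = a := by rw [hp1]; exact eA.apply_symm_apply a
    refine ⟨p.2, (hΓ_mem _).mpr ⟨eA.symm a, ?_⟩⟩
    have hpe : (a, p.2) = p := by rw [← hp1']
    rw [hpe]; exact hp
  have hranΓ : ∀ b : B, ∃ a : A, (a, b) ∈ Γ := by
    intro b
    obtain ⟨p, hp, hp2⟩ := hran (eB.symm b)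
    have hp2' : p.2 = b := by rw [hp2]; exact eB.apply_symm_apply b
    refine ⟨p.1, (hΓ_mem _).mpr ⟨eB.symm b, ?_⟩⟩
    have hpe : (p.1, b) = p := by rw [← hp2']
    rw [hpe]; exact hp
  -- the function
  choose f hf using hdomΓ
  have huniq : ∀ (a : A) (b : B), (a, b) ∈ Γ → f a = b := by
    intro a b hb
    exact hΓPI.1 (a, f a) (hf a) (a, b) hb rfl
  refine ⟨f, ⟨?_, ?_⟩, ?_⟩
  · -- injective
    intro a a' h
    exact hΓPI.2 (a, f a) (hf a) (a', f a') (hf a') h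
  · -- surjective
    intro b
    obtain ⟨a, ha⟩ := hranΓ b
    exact ⟨a, huniq a b ha⟩
  · -- density of the graph
    intro a₁ c₁ hac b₁ d₁ hbd
    set i := eP.symm (a₁, c₁, b₁, d₁) with hidef
    have hPi : eP i = (a₁, c₁, b₁, d₁) := eP.apply_symm_apply _
    have h₁ : (eP i).1 < (eP i).2.1 := by rw [hPi]; exact hac
    have h₂ : (eP i).2.2.1 < (eP i).2.2.2 := by rw [hPi]; exact hbd
    obtain ⟨p, hp, hp1, hp2⟩ := hdens i h₁ h₂
    have hpΓ : (p.1, p.2) ∈ Γ := (hΓ_mem _).mpr ⟨i, by simpa using hp⟩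
    have hfp : f p.1 = p.2 := huniq p.1 p.2 hpΓ
    rw [hPi] at hp1 hp2
    exact ⟨p.1, hp1.1, hp1.2, by rw [hfp]; exact hp2.1, by rw [hfp]; exact hp2.2⟩
end
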